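/- arXiv:1901.00163 — 4 statements merged into one kernel-verified Lean document; each statement's English description precedes it below -/
import Mathlib

section
/- Let φ : [0,T) → ℝ be C² with φ(0) = α > 0, φ'(0) = β > 0, and φ''(t) ≥ h(φ(t)) for all t, where h(s) ≥ 0 for s ≥ α. Then for every t in [0,T), t ≤ ∫_α^{φ(t)} (β² + 2∫_α^s h(ξ) dξ)^{-1/2} ds. -/
/-!
Along a trajectory with `φ' > 0` the quantity `φ'² - 2∫_α^φ h` is nondecreasing, because its
derivative is `2φ'(φ'' - h(φ)) ≥ 0`; this is the energy inequality
`φ'(t)² ≥ β² + 2∫_α^{φ(t)} h`. Hence `(β² + 2∫_α^{φ} h)^{-1/2} φ' ≥ 1`, and integrating this over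
`[0, t]` and substituting `s = φ(τ)` gives the bound. Positivity of `φ'` comes from a first-exit
argument: up to the first zero `u` of `φ'`, `φ` increases, so `φ ≥ α`, so `φ'' ≥ h(φ) ≥ 0`, so
`φ'(u) ≥ φ'(0) = β > 0`.
-/

open Set MeasureTheory intervalIntegral

theorem monotoneOn_of_hasDerivWithinAt_nonneg_of_subset {f f' : ℝ → ℝ} {D s : Set ℝ}
    (hs : Convex ℝ s) (hsD : s ⊆ D) (hf : ∀ x ∈ D, HasDerivWithinAt f (f' x) D x)
    (hf' : ∀ x ∈ interior s, 0 ≤ f' x) : MonotoneOn f s :=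
  monotoneOn_of_hasDerivWithinAt_nonneg hs
    (fun x hx => (hf x (hsD hx)).continuousWithinAt.mono hsD)
    (fun x hx => (hf x (hsD (interior_subset hx))).mono (interior_subset.trans hsD)) hf'

theorem monotoneOn_energy {x x' x'' h : ℝ → ℝ} {D : Set ℝ} (hD : Convex ℝ D) (a : ℝ)
    (hx : ∀ t ∈ D, HasDerivWithinAt x (x' t) D t)
    (hx' : ∀ t ∈ D, HasDerivWithinAt x' (x'' t) D t) (hh : Continuous h)
    (hineq : ∀ t ∈ interior D, h (x t) ≤ x'' t) (hpos : ∀ t ∈ interior D, 0 ≤ x' t) :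
    MonotoneOn (fun t => x' t ^ 2 - 2 * ∫ ξ in a..x t, h ξ) D := by
  refine monotoneOn_of_hasDerivWithinAt_nonneg_of_subset hD subset_rfl
    (f' := fun t => 2 * x' t * x'' t - 2 * (h (x t) * x' t)) (fun t ht => ?_) (fun t ht => ?_)
  · have hprim := (hh.integral_hasStrictDerivAt a (x t)).hasDerivAt
    simpa using
      ((hx' t ht).fun_pow 2).fun_sub ((hprim.comp_hasDerivWithinAt t (hx t ht)).const_mul 2)
  · nlinarith [hineq t ht, hpos t ht]

theorem sub_le_integral_of_one_le_comp_mul_deriv {φ φ' F : ℝ → ℝ} {a b : ℝ} (hab : a ≤ b)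
    (hφ : ∀ t ∈ Icc a b, HasDerivWithinAt φ (φ' t) (Icc a b) t)
    (hφ' : ContinuousOn φ' (Icc a b)) (hF : ContinuousOn F (φ '' Icc a b))
    (hle : ∀ t ∈ Icc a b, 1 ≤ F (φ t) * φ' t) :
    b - a ≤ ∫ s in φ a..φ b, F s := by
  have hφc : ContinuousOn φ (Icc a b) := fun t ht => (hφ t ht).continuousWithinAt
  have hderiv : ∀ t ∈ Ioo (min a b) (max a b), HasDerivWithinAt φ (φ' t) (Ioi t) t := by
    intro t ht
    rw [min_eq_left hab, max_eq_right hab] at ht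
    exact ((hφ t (Ioo_subset_Icc_self ht)).hasDerivAt (Icc_mem_nhds ht.1 ht.2)).hasDerivWithinAt
  rw [← integral_comp_mul_deriv'' (by rwa [uIcc_of_le hab]) hderiv (by rwa [uIcc_of_le hab])
    (by rwa [uIcc_of_le hab])]
  calc b - a = ∫ _ in a..b, (1 : ℝ) := by simp
    _ ≤ ∫ t in a..b, (F ∘ φ) t * φ' t :=
      integral_mono_on hab intervalIntegrable_const
        (ContinuousOn.intervalIntegrable (by
          rw [uIcc_of_le hab]
          exact (hF.comp hφc (mapsTo_image φ _)).mul hφ')) hle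

theorem one_le_rpow_neg_half_mul {a b : ℝ} (ha : 0 < a) (hb : 0 ≤ b) (hab : a ≤ b ^ 2) :
    1 ≤ a ^ (-(1 / 2) : ℝ) * b := by
  have hsqrt : Real.sqrt a ≤ b := Real.sqrt_le_iff.2 ⟨hb, hab⟩
  rw [Real.rpow_neg ha.le, ← Real.sqrt_eq_rpow, ← div_eq_inv_mul,
    one_le_div (Real.sqrt_pos.2 ha)]
  exact hsqrt

theorem deriv_pos_of_second_deriv_ge {T α β : ℝ} {φ φ' φ'' h : ℝ → ℝ} (hβ : 0 < β)
    (hφ0 : φ 0 = α) (hφ'0 : φ' 0 = β)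
    (hd1 : ∀ t ∈ Ico 0 T, HasDerivWithinAt φ (φ' t) (Ico 0 T) t)
    (hd2 : ∀ t ∈ Ico 0 T, HasDerivWithinAt φ' (φ'' t) (Ico 0 T) t)
    (hineq : ∀ t ∈ Ico 0 T, h (φ t) ≤ φ'' t) (hh : ∀ s, α ≤ s → 0 ≤ h s) :
    ∀ t ∈ Ico 0 T, 0 < φ' t := by
  intro t ht
  by_contra! hneg
  have hsub : Icc 0 t ⊆ Ico 0 T := Icc_subset_Ico_right ht.2
  have hφ'c : ContinuousOn φ' (Icc 0 t) := fun s hs =>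
    (hd2 s (hsub hs)).continuousWithinAt.mono hsub
  have hclosed : IsClosed (Icc 0 t ∩ φ' ⁻¹' Iic 0) :=
    hφ'c.preimage_isClosed_of_isClosed isClosed_Icc isClosed_Iic
  obtain ⟨u, ⟨hu, hu0⟩, hmin⟩ := (isCompact_Icc.of_isClosed_subset hclosed
    inter_subset_left).exists_isLeast ⟨t, ⟨ht.1, le_rfl⟩, hneg⟩
  have hsubu : Icc 0 u ⊆ Ico 0 T := (Icc_subset_Icc_right hu.2).trans hsub
  have hposu : ∀ s ∈ interior (Icc 0 u), 0 < φ' s := by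
    rw [interior_Icc]
    intro s hs
    by_contra! hs0
    exact hs.2.not_ge (hmin ⟨⟨hs.1.le, hs.2.le.trans hu.2⟩, hs0⟩)
  have hφmono := monotoneOn_of_hasDerivWithinAt_nonneg_of_subset (convex_Icc 0 u) hsubu hd1
    fun s hs => (hposu s hs).le
  have hφ'mono := monotoneOn_of_hasDerivWithinAt_nonneg_of_subset (convex_Icc 0 u) hsubu hd2
    fun s hs => by
      have hs' := interior_subset hs
      have hαs : α ≤ φ s := hφ0 ▸ hφmono ⟨le_rfl, hu.1⟩ hs' hs'.1
      exact (hh _ hαs).trans (hineq s (hsubu hs'))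
  have := hφ'mono ⟨le_rfl, hu.1⟩ ⟨hu.1, le_rfl⟩ hu.1
  simp only [mem_preimage, mem_Iic] at hu0
  linarith

theorem stmt_1_general (T : ℝ) (φ φ' φ'' h : ℝ → ℝ) (α β : ℝ)
    (hβ : 0 < β)
    (hφ0 : φ 0 = α) (hφ'0 : φ' 0 = β)
    (hd1 : ∀ t ∈ Set.Ico (0:ℝ) T, HasDerivWithinAt φ (φ' t) (Set.Ico 0 T) t)
    (hd2 : ∀ t ∈ Set.Ico (0:ℝ) T, HasDerivWithinAt φ' (φ'' t) (Set.Ico 0 T) t)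
    (hhC : Continuous h)
    (hineq : ∀ t ∈ Set.Ico (0:ℝ) T, φ'' t ≥ h (φ t))
    (hh : ∀ s, α ≤ s → 0 ≤ h s) :
    ∀ t ∈ Set.Ico (0:ℝ) T,
      t ≤ ∫ s in α..φ t, (β ^ 2 + 2 * ∫ ξ in α..s, h ξ) ^ (-(1/2) : ℝ) := by
  intro t ht
  have hpos := deriv_pos_of_second_deriv_ge hβ hφ0 hφ'0 hd1 hd2 hineq hh
  have hsub : Icc 0 t ⊆ Ico 0 T := Icc_subset_Ico_right ht.2
  have h0 : (0 : ℝ) ∈ Ico 0 T := ⟨le_rfl, ht.1.trans_lt ht.2⟩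
  have hαφ : ∀ s ∈ Ico 0 T, α ≤ φ s := fun s hs =>
    hφ0 ▸ monotoneOn_of_hasDerivWithinAt_nonneg_of_subset (convex_Ico 0 T) subset_rfl hd1
      (fun s hs => (hpos s (interior_subset hs)).le) h0 hs hs.1
  set g : ℝ → ℝ := fun u => β ^ 2 + 2 * ∫ ξ in α..u, h ξ
  have hg : ∀ u, α ≤ u → 0 < g u := fun u hu => by
    have := integral_nonneg (μ := volume) hu fun ξ hξ => hh ξ hξ.1
    positivity
  have henergy : ∀ s ∈ Ico 0 T, g (φ s) ≤ φ' s ^ 2 := fun s hs => by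
    have := monotoneOn_energy (convex_Ico 0 T) α hd1 hd2 hhC
      (fun s hs => hineq s (interior_subset hs)) (fun s hs => (hpos s (interior_subset hs)).le)
      h0 hs hs.1
    simp only [hφ0, hφ'0, integral_same] at this
    simp only [g]
    linarith
  have hgc : Continuous g := continuous_const.add <| continuous_const.mul <|
    continuous_primitive (fun _ _ => hhC.intervalIntegrable _ _) α
  calc t = t - 0 := (sub_zero t).symm
    _ ≤ ∫ s in φ 0..φ t, g s ^ (-(1 / 2) : ℝ) :=
      sub_le_integral_of_one_le_comp_mul_deriv ht.1 (fun s hs => (hd1 s (hsub hs)).mono hsub)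
        (fun s hs => (hd2 s (hsub hs)).continuousWithinAt.mono hsub)
        (hgc.continuousOn.rpow_const <| by
          rintro _ ⟨s, hs, rfl⟩
          exact Or.inl (hg _ (hαφ s (hsub hs))).ne')
        fun s hs => one_le_rpow_neg_half_mul (hg _ (hαφ s (hsub hs))) (hpos s (hsub hs)).le
          (henergy s (hsub hs))
    _ = _ := by rw [hφ0]

/-- Glassey ODE lemma, part (2): under `φ'' ≥ h(φ)` with `h ≥ 0` on `[α,∞)`,
`φ(0) = α > 0`, `φ'(0) = β > 0`, one has
`t ≤ ∫_α^{φ(t)} (β² + 2∫_α^s h)^(−1/2) ds` for `t ∈ [0,T)`. -/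
theorem stmt_1 (T : ℝ) (hT : 0 < T) (φ φ' φ'' h : ℝ → ℝ) (α β : ℝ)
    (hα : 0 < α) (hβ : 0 < β)
    (hφ0 : φ 0 = α) (hφ'0 : φ' 0 = β)
    (hd1 : ∀ t ∈ Set.Ico (0:ℝ) T, HasDerivWithinAt φ (φ' t) (Set.Ico 0 T) t)
    (hd2 : ∀ t ∈ Set.Ico (0:ℝ) T, HasDerivWithinAt φ' (φ'' t) (Set.Ico 0 T) t)
    (hC : ContinuousOn φ'' (Set.Ico 0 T))
    (hhC : Continuous h)
    (hineq : ∀ t ∈ Set.Ico (0:ℝ) T, φ'' t ≥ h (φ t))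
    (hh : ∀ s, α ≤ s → 0 ≤ h s) :
    ∀ t ∈ Set.Ico (0:ℝ) T,
      t ≤ ∫ s in α..φ t, (β ^ 2 + 2 * ∫ ξ in α..s, h ξ) ^ (-(1/2) : ℝ) :=
  stmt_1_general T φ φ' φ'' h α β hβ hφ0 hφ'0 hd1 hd2 hhC hineq hh
end

section
/- Let α > 0, β > 0, λ₁ > 0, κ > 0, r > 1, and suppose α ≥ (4λ₁/κ²)^{1/(r-1)}. Let φ be C² on its maximal interval of existence with φ(0) = α, φ'(0) = β, and φ''(t) + λ₁ φ(t) ≥ (κ²/4)|φ(t)|^r. Then φ blows up in finite time T ≤ ∫_α^∞ [λ₁α² + β² − λ₁ s² + (κ²/(2+2r))(s^{r+1} − α^{r+1})]^{-1/2} ds, i.e. φ cannot be extended as a finite C² function beyond time T. -/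
/-!
With `h s = κ²/4 s^r - lam s`, the threshold on `α` gives `h ≥ 0` on `[α, ∞)`. Hence `φ'' ≥ 0`
as long as `φ ≥ α`, and a continuity argument shows `φ' > 0` and `φ ≥ α` for all time. For the
primitive `F` of `2h` with `F α = β²`, the energy `φ'² - F(φ)` is then nondecreasing and vanishes
at `t = 0`, so `φ' ≥ √F(φ)`. Substituting `u = φ t` in `t ≤ ∫₀ᵗ φ' F(φ)^{-1/2}` bounds `t` by
`∫_α^∞ F^{-1/2}`, which is finite because `F` grows like `s^{r+1}` with `r > 1`.
-/

open Real Set MeasureTheory Filter Topology Asymptotics intervalIntegral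

theorem monotoneOn_of_forall_hasDerivWithinAt_nonneg {D : Set ℝ} {f f' : ℝ → ℝ}
    (hD : Convex ℝ D) (hf : ∀ x ∈ D, HasDerivWithinAt f (f' x) D x)
    (hf' : ∀ x ∈ interior D, 0 ≤ f' x) : MonotoneOn f D :=
  monotoneOn_of_hasDerivWithinAt_nonneg hD (fun x hx ↦ (hf x hx).continuousWithinAt)
    (fun x hx ↦ (hf x (interior_subset hx)).mono interior_subset) hf'

theorem pos_on_Ico_of_pos_before {f : ℝ → ℝ} {a T : ℝ} (hf : ContinuousOn f (Ico a T))
    (ha : 0 < f a) (hstep : ∀ t ∈ Ioo a T, (∀ s ∈ Ico a t, 0 < f s) → 0 < f t) :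
    ∀ t ∈ Ico a T, 0 < f t := by
  by_contra! hbad
  obtain ⟨t₀, ht₀, hft₀⟩ := hbad
  set S := {t ∈ Ico a T | f t ≤ 0}
  have hS : S.Nonempty := ⟨t₀, ht₀, hft₀⟩
  have hbdd : BddBelow S := ⟨a, fun x hx ↦ hx.1.1⟩
  have haS : a ≤ sInf S := le_csInf hS fun x hx ↦ hx.1.1
  have hST : sInf S < T := (csInf_le hbdd ⟨ht₀, hft₀⟩).trans_lt ht₀.2
  have hfS : f (sInf S) ≤ 0 := by
    have : (𝓝[S] sInf S).NeBot :=
      mem_closure_iff_nhdsWithin_neBot.mp (csInf_mem_closure hS hbdd)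
    exact le_of_tendsto ((hf _ ⟨haS, hST⟩).mono fun x (hx : x ∈ S) ↦ hx.1)
      (eventually_mem_nhdsWithin.mono fun x (hx : x ∈ S) ↦ hx.2)
  have hbefore : ∀ s ∈ Ico a (sInf S), 0 < f s := fun s hs ↦
    not_le.1 fun h ↦ (csInf_le hbdd ⟨⟨hs.1, hs.2.trans hST⟩, h⟩).not_gt hs.2
  have haS' : a < sInf S := haS.lt_of_ne (by rintro h; rw [← h] at hfS; linarith)
  exact (hstep _ ⟨haS', hST⟩ hbefore).not_ge hfS

section SecondOrder

variable {T : ℝ} {φ φ' φ'' : ℝ → ℝ}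

/-- As long as `φ' > 0`, `φ` stays above `φ 0`, so `φ'' ≥ 0` keeps `φ'` above `φ' 0`. -/
theorem deriv_pos_of_second_deriv_nonneg
    (hd1 : ∀ t ∈ Ico 0 T, HasDerivWithinAt φ (φ' t) (Ico 0 T) t)
    (hd2 : ∀ t ∈ Ico 0 T, HasDerivWithinAt φ' (φ'' t) (Ico 0 T) t) (hφ'0 : 0 < φ' 0)
    (hφ'' : ∀ t ∈ Ico 0 T, φ 0 ≤ φ t → 0 ≤ φ'' t) :
    ∀ t ∈ Ico 0 T, 0 < φ' t := by
  refine pos_on_Ico_of_pos_before (fun t ht ↦ (hd2 t ht).continuousWithinAt) hφ'0 ?_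
  intro t ht hpos
  have hsub : Icc 0 t ⊆ Ico 0 T := Icc_subset_Ico_right ht.2
  have h0 : (0 : ℝ) ∈ Icc 0 t := left_mem_Icc.2 ht.1.le
  have hφ_ge : ∀ s ∈ Icc 0 t, φ 0 ≤ φ s := fun s hs ↦
    monotoneOn_of_forall_hasDerivWithinAt_nonneg (convex_Icc 0 t)
      (fun x hx ↦ (hd1 x (hsub hx)).mono hsub)
      (fun x hx ↦ (hpos x (Ioo_subset_Ico_self (by simpa using hx))).le) h0 hs hs.1
  have hφ'_mono : MonotoneOn φ' (Icc 0 t) :=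
    monotoneOn_of_forall_hasDerivWithinAt_nonneg (convex_Icc 0 t)
      (fun x hx ↦ (hd2 x (hsub hx)).mono hsub)
      (fun x hx ↦ hφ'' x (hsub (interior_subset hx)) (hφ_ge x (interior_subset hx)))
  exact hφ'0.trans_le (hφ'_mono h0 (right_mem_Icc.2 ht.1.le) ht.1.le)

end SecondOrder

theorem le_setIntegral_Ioi_of_one_le_deriv_mul {φ φ' g : ℝ → ℝ} {α T : ℝ}
    (hd : ∀ t ∈ Ico 0 T, HasDerivWithinAt φ (φ' t) (Ico 0 T) t)
    (hφ' : ContinuousOn φ' (Ico 0 T)) (hφ0 : φ 0 = α) (hφα : ∀ t ∈ Ico 0 T, α ≤ φ t)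
    (hg : ContinuousOn g (Ici α)) (hgi : IntegrableOn g (Ioi α))
    (hg0 : ∀ s ∈ Ioi α, 0 ≤ g s) (hone : ∀ t ∈ Ico 0 T, 1 ≤ φ' t * g (φ t)) :
    T ≤ ∫ s in Ioi α, g s := by
  refine le_of_forall_lt_imp_le_of_dense fun t ht ↦ ?_
  rcases lt_or_ge t 0 with ht0 | ht0
  · exact ht0.le.trans (setIntegral_nonneg measurableSet_Ioi hg0)
  have hsub : Icc 0 t ⊆ Ico 0 T := Icc_subset_Ico_right ht
  have huIcc : uIcc 0 t = Icc 0 t := uIcc_of_le ht0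
  have hφC : ContinuousOn φ (Icc 0 t) := fun x hx ↦ ((hd x (hsub hx)).continuousWithinAt).mono hsub
  have hgφ : ContinuousOn (g ∘ φ) (Icc 0 t) := hg.comp hφC fun x hx ↦ hφα x (hsub hx)
  calc t = ∫ _ in (0 : ℝ)..t, (1 : ℝ) := by simp
    _ ≤ ∫ x in (0 : ℝ)..t, φ' x • (g ∘ φ) x :=
      integral_mono_on ht0 intervalIntegrable_const
        (((hφ'.mono hsub).smul hgφ).intervalIntegrable_of_Icc ht0) fun x hx ↦ hone x (hsub hx)
    _ = ∫ u in φ 0..φ t, g u := by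
      refine integral_deriv_smul_comp'' (huIcc ▸ hφC) (fun x hx ↦ ?_) (huIcc ▸ hφ'.mono hsub)
        (huIcc ▸ hg.mono (image_subset_iff.2 fun x hx ↦ hφα x (hsub hx)))
      rw [min_eq_left ht0, max_eq_right ht0] at hx
      exact ((hd x (Ioo_subset_Ico_self ⟨hx.1, hx.2.trans ht⟩)).hasDerivAt
        (Ico_mem_nhds hx.1 (hx.2.trans ht))).hasDerivWithinAt
    _ = ∫ u in Ioc α (φ t), g u := by rw [hφ0, integral_of_le (hφα t ⟨ht0, ht⟩)]
    _ ≤ ∫ s in Ioi α, g s :=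
      setIntegral_mono_set hgi ((ae_restrict_iff' measurableSet_Ioi).2 (ae_of_all _ hg0))
        Ioc_subset_Ioi_self.eventuallyLE

theorem one_le_mul_rpow_neg_half_of_le_sq {a b : ℝ} (ha : 0 < a) (hb : 0 ≤ b)
    (hab : a ≤ b ^ 2) : 1 ≤ b * a ^ (-(1 / 2) : ℝ) := by
  rw [rpow_neg ha.le, ← sqrt_eq_rpow, ← div_eq_mul_inv, one_le_div (sqrt_pos.2 ha)]
  exact sqrt_le_iff.2 ⟨hb, hab⟩

theorem mul_le_rpow_of_threshold_le {lam κ r α s : ℝ} (hlam : 0 ≤ lam) (hκ : 0 < κ) (hr : 1 < r)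
    (hα : 0 < α) (hαbig : (4 * lam / κ ^ 2) ^ ((1 : ℝ) / (r - 1)) ≤ α) (hs : α ≤ s) :
    lam * s ≤ κ ^ 2 / 4 * s ^ r := by
  have hr1 : 0 < r - 1 := by linarith
  have hs0 : 0 < s := hα.trans_le hs
  have hthr : 4 * lam / κ ^ 2 ≤ s ^ (r - 1) := by
    calc 4 * lam / κ ^ 2 = ((4 * lam / κ ^ 2) ^ ((1 : ℝ) / (r - 1))) ^ (r - 1) := by
          rw [← rpow_mul (by positivity), one_div_mul_cancel hr1.ne', rpow_one]
      _ ≤ s ^ (r - 1) := rpow_le_rpow (by positivity) (hαbig.trans hs) hr1.le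
  have hsr : s ^ r = s ^ (r - 1) * s := by rw [← rpow_add_one hs0.ne', sub_add_cancel]
  rw [div_le_iff₀ (by positivity)] at hthr
  rw [hsr]
  nlinarith

/-- The paper's integrand is `F^{-1/2}` for this `F`: `F' = 2h` and `F α = β²`. -/
noncomputable def blowupPotential (lam κ r α β s : ℝ) : ℝ :=
  lam * α ^ 2 + β ^ 2 - lam * s ^ 2 + κ ^ 2 / (2 + 2 * r) * (s ^ (r + 1) - α ^ (r + 1))

section Potential

variable {lam κ r α β : ℝ}

theorem blowupPotential_self : blowupPotential lam κ r α β α = β ^ 2 := by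
  simp [blowupPotential]

theorem hasDerivAt_blowupPotential (hr : r ≠ -1) {s : ℝ} (hs : 0 < s) :
    HasDerivAt (blowupPotential lam κ r α β) (2 * (κ ^ 2 / 4 * s ^ r - lam * s)) s := by
  have hpow : HasDerivAt (fun x : ℝ ↦ x ^ (r + 1)) ((r + 1) * s ^ r) s := by
    simpa using hasDerivAt_rpow_const (p := r + 1) (Or.inl hs.ne')
  have h := (((hasDerivAt_pow 2 s).const_mul lam).const_sub (lam * α ^ 2 + β ^ 2)).add
    ((hpow.sub_const (α ^ (r + 1))).const_mul (κ ^ 2 / (2 + 2 * r)))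
  have hr' : 2 + 2 * r ≠ 0 := fun h ↦ hr (by linarith)
  have hcoef : κ ^ 2 / (2 + 2 * r) * (r + 1) = κ ^ 2 / 2 := by
    rw [div_mul_eq_mul_div, div_eq_div_iff hr' two_ne_zero]
    ring
  refine (show HasDerivAt (blowupPotential lam κ r α β) _ s from h).congr_deriv ?_
  norm_num
  linear_combination s ^ r * hcoef

theorem continuousOn_blowupPotential (hα : 0 < α) (hr : r ≠ -1) :
    ContinuousOn (blowupPotential lam κ r α β) (Ici α) := fun _ hs ↦
  (hasDerivAt_blowupPotential hr (hα.trans_le hs)).continuousAt.continuousWithinAt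

theorem sq_le_blowupPotential (hα : 0 < α) (hr : r ≠ -1)
    (hdom : ∀ s, α ≤ s → lam * s ≤ κ ^ 2 / 4 * s ^ r) {s : ℝ} (hs : α ≤ s) :
    β ^ 2 ≤ blowupPotential lam κ r α β s := by
  have hmono : MonotoneOn (blowupPotential lam κ r α β) (Ici α) :=
    monotoneOn_of_forall_hasDerivWithinAt_nonneg (convex_Ici α)
      (fun x hx ↦ (hasDerivAt_blowupPotential hr (hα.trans_le hx)).hasDerivWithinAt)
      fun x hx ↦ by
        have := hdom x (interior_subset hx)
        linarith
  simpa [blowupPotential_self] using hmono self_mem_Ici hs hs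

theorem blowupPotential_pos (hα : 0 < α) (hr : r ≠ -1)
    (hdom : ∀ s, α ≤ s → lam * s ≤ κ ^ 2 / 4 * s ^ r) (hβ : β ≠ 0) {s : ℝ} (hs : α ≤ s) :
    0 < blowupPotential lam κ r α β s :=
  (sq_pos_of_ne_zero hβ).trans_le (sq_le_blowupPotential hα hr hdom hs)

theorem continuousOn_blowupPotential_rpow (hα : 0 < α) (hr : r ≠ -1)
    (hdom : ∀ s, α ≤ s → lam * s ≤ κ ^ 2 / 4 * s ^ r) (hβ : β ≠ 0) (p : ℝ) :
    ContinuousOn (fun s ↦ blowupPotential lam κ r α β s ^ p) (Ici α) :=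
  (continuousOn_blowupPotential hα hr).rpow_const fun _ hs ↦
    Or.inl (blowupPotential_pos hα hr hdom hβ hs).ne'

theorem eventually_le_blowupPotential (hlam : 0 ≤ lam) (hκ : 0 < κ) (hr : 1 < r) :
    ∀ᶠ s in atTop, κ ^ 2 / (2 + 2 * r) / 2 * s ^ (r + 1) ≤ blowupPotential lam κ r α β s := by
  have hc : 0 < κ ^ 2 / (2 + 2 * r) := div_pos (by positivity) (by linarith)
  have hlarge : ∀ᶠ s in atTop, 4 * lam / (κ ^ 2 / (2 + 2 * r)) ≤ s ^ (r - 1) :=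
    (tendsto_rpow_atTop (by linarith)).eventually_ge_atTop _
  have hlarge' : ∀ᶠ s in atTop, 4 * α ^ (r + 1) ≤ s ^ (r + 1) :=
    (tendsto_rpow_atTop (by linarith)).eventually_ge_atTop _
  filter_upwards [hlarge, hlarge', eventually_gt_atTop 0] with s h1 h2 hs
  have hsplit : s ^ (r + 1) = s ^ (r - 1) * s ^ 2 := by
    rw [← rpow_natCast, ← rpow_add hs]
    congr 1
    ring
  rw [div_le_iff₀ hc] at h1
  have hquad := mul_le_mul_of_nonneg_right h1 (sq_nonneg s)
  have hconst := mul_le_mul_of_nonneg_left h2 hc.le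
  have : 0 ≤ lam * α ^ 2 + β ^ 2 := by positivity
  unfold blowupPotential
  nlinarith

theorem integrableOn_blowupPotential_rpow_neg_half (hlam : 0 ≤ lam) (hκ : 0 < κ) (hr : 1 < r)
    (hα : 0 < α) (hdom : ∀ s, α ≤ s → lam * s ≤ κ ^ 2 / 4 * s ^ r) (hβ : β ≠ 0) :
    IntegrableOn (fun s ↦ blowupPotential lam κ r α β s ^ (-(1 / 2) : ℝ)) (Ioi α) := by
  have hc : 0 < κ ^ 2 / (2 + 2 * r) / 2 := div_pos (div_pos (by positivity) (by linarith)) two_pos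
  refine (((continuousOn_blowupPotential_rpow hα (by linarith) hdom hβ _).locallyIntegrableOn
    measurableSet_Ici).integrableOn_of_isBigO_atTop (g := fun s ↦ s ^ ((r + 1) * (-(1 / 2) : ℝ)))
    ?_ (integrableAtFilter_rpow_atTop_iff.2 (by linarith))).mono_set Ioi_subset_Ici_self
  refine IsBigO.of_bound ((κ ^ 2 / (2 + 2 * r) / 2) ^ (-(1 / 2) : ℝ)) ?_
  filter_upwards [eventually_le_blowupPotential hlam hκ hr, eventually_gt_atTop 0] with s hF hs
  have hcs : 0 < κ ^ 2 / (2 + 2 * r) / 2 * s ^ (r + 1) := by positivity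
  rw [norm_of_nonneg (rpow_nonneg (hcs.le.trans hF) _), norm_of_nonneg (rpow_nonneg hs.le _),
    rpow_mul hs.le, ← mul_rpow hc.le (rpow_nonneg hs.le _)]
  exact rpow_le_rpow_of_nonpos hcs hF (by norm_num)

end Potential

theorem blowupPotential_le_sq_deriv {T lam κ r α β : ℝ} {φ φ' φ'' : ℝ → ℝ}
    (hd1 : ∀ t ∈ Ico 0 T, HasDerivWithinAt φ (φ' t) (Ico 0 T) t)
    (hd2 : ∀ t ∈ Ico 0 T, HasDerivWithinAt φ' (φ'' t) (Ico 0 T) t)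
    (hφ0 : φ 0 = α) (hφ'0 : φ' 0 = β) (hα : 0 < α) (hr : r ≠ -1)
    (hφα : ∀ t ∈ Ico 0 T, α ≤ φ t) (hφ' : ∀ t ∈ Ico 0 T, 0 ≤ φ' t)
    (hineq : ∀ t ∈ Ico 0 T, κ ^ 2 / 4 * φ t ^ r ≤ φ'' t + lam * φ t) {t : ℝ} (ht : t ∈ Ico 0 T) :
    blowupPotential lam κ r α β (φ t) ≤ φ' t ^ 2 := by
  have hmono : MonotoneOn (fun t ↦ φ' t ^ 2 - blowupPotential lam κ r α β (φ t)) (Ico 0 T) :=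
    monotoneOn_of_forall_hasDerivWithinAt_nonneg (convex_Ico 0 T)
      (f' := fun t ↦ 2 * φ' t * (φ'' t + lam * φ t - κ ^ 2 / 4 * φ t ^ r))
      (fun x hx ↦ (((hd2 x hx).fun_pow 2).sub ((hasDerivAt_blowupPotential hr
        (hα.trans_le (hφα x hx))).comp_hasDerivWithinAt x (hd1 x hx))).congr_deriv (by
          norm_num
          ring))
      fun x hx ↦ mul_nonneg (mul_nonneg zero_le_two (hφ' x (interior_subset hx)))
        (by linarith [hineq x (interior_subset hx)])
  have := hmono ⟨le_rfl, ht.1.trans_lt ht.2⟩ ht ht.1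
  simp only [hφ0, hφ'0, blowupPotential_self, sub_self] at this
  linarith

theorem stmt_2_general (α β lam κ r tstar : ℝ)
    (hα : 0 < α) (hβ : 0 < β) (hlam : 0 < lam) (hκ : 0 < κ) (hr : 1 < r)
    (hαbig : α ≥ (4 * lam / κ ^ 2) ^ ((1:ℝ) / (r - 1)))
    (φ φ' φ'' : ℝ → ℝ)
    (hφ0 : φ 0 = α) (hφ'0 : φ' 0 = β)
    (hd1 : ∀ t ∈ Set.Ico (0:ℝ) tstar, HasDerivWithinAt φ (φ' t) (Set.Ico 0 tstar) t)
    (hd2 : ∀ t ∈ Set.Ico (0:ℝ) tstar, HasDerivWithinAt φ' (φ'' t) (Set.Ico 0 tstar) t)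
    (hineq : ∀ t ∈ Set.Ico (0:ℝ) tstar,
      φ'' t + lam * φ t ≥ κ ^ 2 / 4 * |φ t| ^ r) :
    tstar ≤ ∫ s in Set.Ioi α,
      (lam * α ^ 2 + β ^ 2 - lam * s ^ 2
        + κ ^ 2 / (2 + 2 * r) * (s ^ (r + 1) - α ^ (r + 1))) ^ (-(1/2) : ℝ) := by
  have hr' : r ≠ -1 := by linarith
  have hdom : ∀ s, α ≤ s → lam * s ≤ κ ^ 2 / 4 * s ^ r :=
    fun s ↦ mul_le_rpow_of_threshold_le hlam.le hκ hr hα hαbig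
  have hineq' : ∀ t ∈ Ico 0 tstar, α ≤ φ t → κ ^ 2 / 4 * φ t ^ r ≤ φ'' t + lam * φ t :=
    fun t ht hαt ↦ by simpa [abs_of_pos (hα.trans_le hαt)] using hineq t ht
  have hφ'pos : ∀ t ∈ Ico 0 tstar, 0 < φ' t :=
    deriv_pos_of_second_deriv_nonneg hd1 hd2 (hφ'0 ▸ hβ) fun t ht hαt ↦ by
      rw [hφ0] at hαt
      linarith [hineq' t ht hαt, hdom (φ t) hαt]
  have hφα : ∀ t ∈ Ico 0 tstar, α ≤ φ t := fun t ht ↦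
    hφ0 ▸ monotoneOn_of_forall_hasDerivWithinAt_nonneg (convex_Ico 0 tstar) hd1
      (fun x hx ↦ (hφ'pos x (interior_subset hx)).le) ⟨le_rfl, ht.1.trans_lt ht.2⟩ ht ht.1
  have hF : ∀ s, α ≤ s → 0 < blowupPotential lam κ r α β s :=
    fun _ ↦ blowupPotential_pos hα hr' hdom hβ.ne'
  show tstar ≤ ∫ s in Ioi α, blowupPotential lam κ r α β s ^ (-(1 / 2) : ℝ)
  refine le_setIntegral_Ioi_of_one_le_deriv_mul hd1 (fun t ht ↦ (hd2 t ht).continuousWithinAt)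
    hφ0 hφα (continuousOn_blowupPotential_rpow hα hr' hdom hβ.ne' _)
    (integrableOn_blowupPotential_rpow_neg_half hlam.le hκ hr hα hdom hβ.ne')
    (fun s hs ↦ rpow_nonneg (hF s (le_of_lt hs)).le _) fun t ht ↦ ?_
  exact one_le_mul_rpow_neg_half_of_le_sq (hF _ (hφα t ht)) (hφ'pos t ht).le
    (blowupPotential_le_sq_deriv hd1 hd2 hφ0 hφ'0 hα hr' hφα (fun t ht ↦ (hφ'pos t ht).le)
      (fun t ht ↦ hineq' t ht (hφα t ht)) ht)

/-- ODE blow-up: if `φ'' + λ₁ φ ≥ (κ²/4)|φ|^r` on `[0, t*)` with `φ(0) = α`,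
`φ'(0) = β > 0` and `α ≥ (4λ₁/κ²)^{1/(r-1)}`, then
`t* ≤ ∫_α^∞ [λ₁α² + β² − λ₁s² + (κ²/(2+2r))(s^{r+1} − α^{r+1})]^{−1/2} ds`. -/
theorem stmt_2 (α β lam κ r tstar : ℝ)
    (hα : 0 < α) (hβ : 0 < β) (hlam : 0 < lam) (hκ : 0 < κ) (hr : 1 < r)
    (hαbig : α ≥ (4 * lam / κ ^ 2) ^ ((1:ℝ) / (r - 1)))
    (φ φ' φ'' : ℝ → ℝ)
    (hφ0 : φ 0 = α) (hφ'0 : φ' 0 = β)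
    (hd1 : ∀ t ∈ Set.Ico (0:ℝ) tstar, HasDerivWithinAt φ (φ' t) (Set.Ico 0 tstar) t)
    (hd2 : ∀ t ∈ Set.Ico (0:ℝ) tstar, HasDerivWithinAt φ' (φ'' t) (Set.Ico 0 tstar) t)
    (hC : ContinuousOn φ'' (Set.Ico 0 tstar))
    (hineq : ∀ t ∈ Set.Ico (0:ℝ) tstar,
      φ'' t + lam * φ t ≥ κ ^ 2 / 4 * |φ t| ^ r) :
    tstar ≤ ∫ s in Set.Ioi α,
      (lam * α ^ 2 + β ^ 2 - lam * s ^ 2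
        + κ ^ 2 / (2 + 2 * r) * (s ^ (r + 1) - α ^ (r + 1))) ^ (-(1/2) : ℝ) :=
  stmt_2_general α β lam κ r tstar hα hβ hlam hκ hr hαbig φ φ' φ'' hφ0 hφ'0 hd1 hd2 hineq
end

section
/- Let r > 1, κ > 0, λ₁ > 0, α ≥ (4λ₁/κ²)^{1/(r-1)}, β > 0. Then the improper integral ∫_α^∞ [λ₁α² + β² − λ₁ s² + (κ²/(2+2r))(s^{r+1} − α^{r+1})]^{-1/2} ds is finite. -/
/-!
For `s ≥ α` the bracket is at least `β²`: the tangent-line (Bernoulli) bound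
`s^(r+1) - α^(r+1) ≥ (r+1)/2 · α^(r-1) · (s² - α²)` together with `κ² α^(r-1) ≥ 4λ₁`
makes the remaining terms nonnegative, so the integrand is continuous on `[α, ∞)`.
At infinity the bracket is equivalent to `κ²/(2+2r) · s^(r+1)`, so the integrand is
`O(s^(-(r+1)/2))`, which is integrable because `r > 1`.
-/

open MeasureTheory Set Real Filter Asymptotics

lemma isLittleO_rpow_rpow_atTop {p q : ℝ} (hqp : q < p) :
    (fun x : ℝ => x ^ q) =o[atTop] fun x => x ^ p := by
  refine (isLittleO_iff_tendsto' ?_).mpr ?_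
  · filter_upwards [eventually_gt_atTop 0] with x hx hx0
    exact absurd hx0 (rpow_pos_of_pos hx p).ne'
  · refine (tendsto_rpow_neg_atTop (sub_pos.mpr hqp)).congr' ?_
    filter_upwards [eventually_gt_atTop 0] with x hx
    rw [← rpow_sub hx, neg_sub]

lemma mul_rpow_sub_one_mul_sub_le_rpow_sub_rpow {p a t : ℝ} (hp : 1 ≤ p) (ha : 0 < a)
    (ht : 0 ≤ t) : p * a ^ (p - 1) * (t - a) ≤ t ^ p - a ^ p := by
  have hbern := one_add_mul_self_le_rpow_one_add (s := t / a - 1)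
    (by linarith [div_nonneg ht ha.le]) hp
  rw [add_sub_cancel, div_rpow ht ha.le, le_div_iff₀ (rpow_pos_of_pos ha p)] at hbern
  have hsplit : a ^ p = a ^ (p - 1) * a := by
    rw [← rpow_add_one ha.ne', sub_add_cancel]
  rw [hsplit] at hbern ⊢
  field_simp at hbern
  nlinarith [hbern]

lemma integrableOn_Ioi_rpow_neg_of_isEquivalent {g : ℝ → ℝ} {a c p q : ℝ} (hc : 0 < c)
    (hpq : 1 < p * q) (hg : ContinuousOn g (Ici a)) (hpos : ∀ s ∈ Ici a, 0 < g s)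
    (hequiv : g ~[atTop] fun s => c * s ^ p) :
    IntegrableOn (fun s => g s ^ (-q)) (Ioi a) := by
  have hloc : LocallyIntegrableOn (fun s => g s ^ (-q)) (Ici a) :=
    (hg.rpow_const fun s hs => Or.inl (hpos s hs).ne').locallyIntegrableOn measurableSet_Ici
  have habs : g ~[atTop] fun s => c * |s| ^ p := by
    refine hequiv.congr_right ?_
    filter_upwards [eventually_ge_atTop 0] with s hs
    rw [abs_of_nonneg hs]
  have hbigO : (fun s => g s ^ (-q)) =O[atTop] fun s => s ^ (-(p * q)) := by
    refine (habs.rpow fun s => by positivity).isBigO.trans ?_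
    refine ((isBigO_refl _ atTop).const_mul_left (c ^ (-q))).congr' ?_ .rfl
    filter_upwards [eventually_gt_atTop 0] with s hs
    simp only [Pi.pow_apply]
    rw [abs_of_pos hs, mul_rpow hc.le (rpow_nonneg hs.le p), ← rpow_mul hs.le, mul_neg]
  have hint := hloc.integrableOn_of_isBigO_atTop hbigO
    (integrableAtFilter_rpow_atTop_iff.mpr (by linarith))
  exact hint.mono_set Ioi_subset_Ici_self

lemma sq_rpow_div_two {x : ℝ} (hx : 0 ≤ x) (y : ℝ) : (x ^ 2) ^ (y / 2) = x ^ y := by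
  rw [← rpow_natCast, ← rpow_mul hx, Nat.cast_ofNat, mul_div_cancel₀ y two_ne_zero]

noncomputable def blowUpRadicand (lam κ r α β s : ℝ) : ℝ :=
  lam * α ^ 2 + β ^ 2 - lam * s ^ 2 + κ ^ 2 / (2 + 2 * r) * (s ^ (r + 1) - α ^ (r + 1))

lemma sq_le_blowUpRadicand {lam κ r α β s : ℝ} (hr : 1 ≤ r) (hα : 0 < α)
    (hκα : 4 * lam ≤ κ ^ 2 * α ^ (r - 1)) (hs : α ≤ s) :
    β ^ 2 ≤ blowUpRadicand lam κ r α β s := by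
  have htangent := mul_rpow_sub_one_mul_sub_le_rpow_sub_rpow (p := (r + 1) / 2)
    (by linarith) (pow_pos hα 2) (sq_nonneg s)
  rw [sq_rpow_div_two hα.le, sq_rpow_div_two (hα.le.trans hs),
    show (r + 1) / 2 - 1 = (r - 1) / 2 by ring, sq_rpow_div_two hα.le] at htangent
  have hsq : α ^ 2 ≤ s ^ 2 := pow_le_pow_left₀ hα.le hs 2
  have hc : 0 ≤ κ ^ 2 / (2 + 2 * r) := div_nonneg (sq_nonneg κ) (by linarith)
  have hcp : κ ^ 2 / (2 + 2 * r) * ((r + 1) / 2) = κ ^ 2 / 4 := by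
    field_simp; ring
  calc β ^ 2 ≤ β ^ 2 + (κ ^ 2 / 4 * α ^ (r - 1) - lam) * (s ^ 2 - α ^ 2) := by
        have := mul_nonneg (sub_nonneg.mpr (by linarith : lam ≤ κ ^ 2 / 4 * α ^ (r - 1)))
          (sub_nonneg.mpr hsq)
        linarith
    _ = β ^ 2 + lam * (α ^ 2 - s ^ 2)
          + κ ^ 2 / (2 + 2 * r) * ((r + 1) / 2 * α ^ (r - 1) * (s ^ 2 - α ^ 2)) := by
        rw [← hcp]; ring
    _ ≤ blowUpRadicand lam κ r α β s := by
        unfold blowUpRadicand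
        linarith [mul_le_mul_of_nonneg_left htangent hc]

lemma continuous_blowUpRadicand {lam κ r α β : ℝ} (hr : -1 ≤ r) :
    Continuous (blowUpRadicand lam κ r α β) := by
  unfold blowUpRadicand
  have := continuous_rpow_const (q := r + 1) (by linarith)
  fun_prop

lemma blowUpRadicand_isEquivalent {lam κ r α β : ℝ} (hr : 1 < r) (hκ : κ ≠ 0) :
    blowUpRadicand lam κ r α β ~[atTop] fun s => κ ^ 2 / (2 + 2 * r) * s ^ (r + 1) := by
  have hc : κ ^ 2 / (2 + 2 * r) ≠ 0 := div_ne_zero (pow_ne_zero 2 hκ) (by linarith)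
  have hlowerOrder : (fun s : ℝ =>
      (lam * α ^ 2 + β ^ 2 - κ ^ 2 / (2 + 2 * r) * α ^ (r + 1)) * s ^ (0 : ℝ) - lam * s ^ (2 : ℝ))
      =o[atTop] fun s => κ ^ 2 / (2 + 2 * r) * s ^ (r + 1) :=
    ((isLittleO_rpow_rpow_atTop (by linarith)).const_mul_left _).sub
      ((isLittleO_rpow_rpow_atTop (by linarith)).const_mul_left _) |>.const_mul_right hc
  refine (IsEquivalent.refl.add_isLittleO hlowerOrder).congr_left (.of_eq ?_)
  funext s
  simp only [Pi.add_apply, blowUpRadicand, rpow_zero, rpow_two]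
  ring

/-- Finiteness of the blow-up time integral: for `r > 1`, `κ, λ₁, β > 0` and
`α ≥ (4λ₁/κ²)^{1/(r-1)}`, the improper integral
`∫_α^∞ [λ₁α² + β² − λ₁s² + (κ²/(2+2r))(s^{r+1} − α^{r+1})]^{−1/2} ds` is finite. -/
theorem stmt_3 (α β lam κ r : ℝ)
    (hβ : 0 < β) (hlam : 0 < lam) (hκ : 0 < κ) (hr : 1 < r)
    (hαbig : α ≥ (4 * lam / κ ^ 2) ^ ((1:ℝ) / (r - 1))) :
    MeasureTheory.IntegrableOn
      (fun s : ℝ => (lam * α ^ 2 + β ^ 2 - lam * s ^ 2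
        + κ ^ 2 / (2 + 2 * r) * (s ^ (r + 1) - α ^ (r + 1))) ^ (-(1/2) : ℝ))
      (Set.Ioi α) := by
  have hratio : 0 < 4 * lam / κ ^ 2 := by positivity
  have hα : 0 < α := (rpow_pos_of_pos hratio _).trans_le hαbig
  have hκα : 4 * lam ≤ κ ^ 2 * α ^ (r - 1) := by
    rw [one_div, ge_iff_le, rpow_inv_le_iff_of_pos hratio.le hα.le (by linarith),
      div_le_iff₀' (by positivity)] at hαbig
    exact hαbig
  exact integrableOn_Ioi_rpow_neg_of_isEquivalent (p := r + 1) (by positivity) (by linarith)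
    (continuous_blowUpRadicand (by linarith)).continuousOn
    (fun s hs => (pow_pos hβ 2).trans_le (sq_le_blowUpRadicand hr.le hα hκα hs))
    (blowUpRadicand_isEquivalent hr hκ.ne')
end

section
/- Let J > 0, D = (0,J), μ₁ = (π/J)², ψ(x) = (π/(2J)) sin(πx/J), λ₁ = μ₁ + (c₁² + c₂²)/2, r > 1, κ > 0. Suppose u ∈ C²([0,t*) × [0,J]) solves ∂ₜ²u = ∂ₓ²u + (κ²/4)|u|^r − ((c₁²+c₂²)/2)u on (0,t*) × D with u(t,0) = u(t,J) = 0, u(0,·) = u₀ ≥ 0 smooth, ∂ₜu(0,·) = v₀ ≥ 0 smooth with v₀(x₀) > 0 for some x₀ ∈ D. Set α = ∫_D ψ u₀ dx ≥ (4λ₁/κ²)^{1/(r-1)} and β = ∫_D ψ v₀ dx. Then φ(t) = ∫₀^J ψ(x) u(t,x) dx satisfies φ''(t) + λ₁ φ(t) ≥ (κ²/4)|φ(t)|^r with φ(0) = α and φ'(0) = β > 0. -/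
open Set MeasureTheory intervalIntegral Filter Topology
open scoped ENNReal NNReal


section Helpers

lemma line_fst {E : Type*} [NormedAddCommGroup E] [NormedSpace ℝ E]
    {U : ℝ × ℝ → E} {S : Set (ℝ × ℝ)} {t x : ℝ} {s : Set ℝ}
    (hU : DifferentiableWithinAt ℝ U S (t, x))
    (hmap : Set.MapsTo (fun τ : ℝ => ((τ : ℝ), x)) s S) (hts : t ∈ s) :
    HasDerivWithinAt (fun τ => U (τ, x)) (fderivWithin ℝ U S (t, x) (1, 0)) s t := by
  have hline : HasDerivWithinAt (fun τ : ℝ => ((τ : ℝ), x)) ((1 : ℝ), (0 : ℝ)) s t :=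
    ((hasDerivAt_id t).prodMk (hasDerivAt_const t x)).hasDerivWithinAt
  exact hU.hasFDerivWithinAt.comp_hasDerivWithinAt t hline hmap

lemma line_snd {E : Type*} [NormedAddCommGroup E] [NormedSpace ℝ E]
    {U : ℝ × ℝ → E} {S : Set (ℝ × ℝ)} {t x : ℝ} {s : Set ℝ}
    (hU : DifferentiableWithinAt ℝ U S (t, x))
    (hmap : Set.MapsTo (fun y : ℝ => (t, (y : ℝ))) s S) (hxs : x ∈ s) :
    HasDerivWithinAt (fun y => U (t, y)) (fderivWithin ℝ U S (t, x) (0, 1)) s x := by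
  have hline : HasDerivWithinAt (fun y : ℝ => (t, (y : ℝ))) ((0 : ℝ), (1 : ℝ)) s x :=
    ((hasDerivAt_const x t).prodMk (hasDerivAt_id x)).hasDerivWithinAt
  exact hU.hasFDerivWithinAt.comp_hasDerivWithinAt x hline hmap

lemma clm_line_fst
    {U : ℝ × ℝ → ℝ} {S : Set (ℝ × ℝ)} {t x : ℝ} {s : Set ℝ}
    (hU : DifferentiableWithinAt ℝ (fderivWithin ℝ U S) S (t, x))
    (hmap : Set.MapsTo (fun τ : ℝ => ((τ : ℝ), x)) s S) (hts : t ∈ s) :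
    HasDerivWithinAt (fun τ => fderivWithin ℝ U S (τ, x) (1, 0))
      (fderivWithin ℝ (fderivWithin ℝ U S) S (t, x) (1, 0) (1, 0)) s t := by
  have h := (line_fst hU hmap hts).clm_apply (hasDerivWithinAt_const t s ((1:ℝ),(0:ℝ)))
  simpa using h

lemma clm_line_snd
    {U : ℝ × ℝ → ℝ} {S : Set (ℝ × ℝ)} {t x : ℝ} {s : Set ℝ}
    (hU : DifferentiableWithinAt ℝ (fderivWithin ℝ U S) S (t, x))
    (hmap : Set.MapsTo (fun y : ℝ => (t, (y : ℝ))) s S) (hxs : x ∈ s) :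
    HasDerivWithinAt (fun y => fderivWithin ℝ U S (t, y) (0, 1))
      (fderivWithin ℝ (fderivWithin ℝ U S) S (t, x) (0, 1) (0, 1)) s x := by
  have h := (line_snd hU hmap hxs).clm_apply (hasDerivWithinAt_const x s ((0:ℝ),(1:ℝ)))
  simpa using h

lemma param_deriv {J tstar : ℝ} (hJ : 0 < J)
    {w dw : ℝ → ℝ → ℝ} {ψ : ℝ → ℝ} (hψ : Continuous ψ)
    (hwcont : ContinuousOn (fun p : ℝ × ℝ => w p.1 p.2) (Set.Ico 0 tstar ×ˢ Set.Icc 0 J))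
    (hdwcont : ContinuousOn (fun p : ℝ × ℝ => dw p.1 p.2) (Set.Ico 0 tstar ×ˢ Set.Icc 0 J))
    (hderiv : ∀ x ∈ Set.Icc (0:ℝ) J, ∀ s ∈ Set.Ioo (0:ℝ) tstar,
      HasDerivAt (fun τ => w τ x) (dw s x) s)
    {t : ℝ} (ht : t ∈ Set.Ioo (0:ℝ) tstar) :
    HasDerivAt (fun s => ∫ x in (0:ℝ)..J, ψ x * w s x)
      (∫ x in (0:ℝ)..J, ψ x * dw t x) t := by
  obtain ⟨ht0, ht1⟩ := ht
  set ε : ℝ := min t (tstar - t) / 2 with hε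
  have hε0 : 0 < ε := by
    have : 0 < min t (tstar - t) := lt_min ht0 (by linarith)
    positivity
  have hεt : ε ≤ t / 2 := by
    have := min_le_left t (tstar - t); rw [hε]; linarith
  have hεt' : ε ≤ (tstar - t) / 2 := by
    have := min_le_right t (tstar - t); rw [hε]; linarith
  have hball : Metric.ball t ε ⊆ Set.Ioo 0 tstar := by
    intro s hs
    rw [Metric.mem_ball, Real.dist_eq, abs_lt] at hs
    constructor <;> [linarith; linarith]
  have hK : (Set.Icc (t - ε) (t + ε) ×ˢ Set.Icc (0:ℝ) J) ⊆
      (Set.Ico 0 tstar ×ˢ Set.Icc 0 J) := by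
    rintro ⟨s, x⟩ ⟨⟨hs1, hs2⟩, hx⟩
    exact ⟨⟨by linarith, by linarith⟩, hx⟩
  have hKcont : ContinuousOn (fun p : ℝ × ℝ => ψ p.2 * dw p.1 p.2)
      (Set.Icc (t - ε) (t + ε) ×ˢ Set.Icc (0:ℝ) J) :=
    ((hψ.comp continuous_snd).continuousOn.mul (hdwcont.mono hK))
  obtain ⟨C, hC⟩ := (isCompact_Icc.prod isCompact_Icc).exists_bound_of_continuousOn hKcont
  have hx_cont : ∀ s ∈ Set.Ico (0:ℝ) tstar, ContinuousOn (fun x => ψ x * w s x)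
      (Set.Icc (0:ℝ) J) := by
    intro s hs
    have h1 : ContinuousOn ((fun p : ℝ × ℝ => w p.1 p.2) ∘ (fun x : ℝ => (s, x)))
        (Set.Icc (0:ℝ) J) :=
      hwcont.comp (continuous_const.prodMk continuous_id).continuousOn
        (fun x hx => ⟨hs, hx⟩)
    exact hψ.continuousOn.mul h1
  have hx_cont' : ∀ s ∈ Set.Ico (0:ℝ) tstar, ContinuousOn (fun x => ψ x * dw s x)
      (Set.Icc (0:ℝ) J) := by
    intro s hs
    have h1 : ContinuousOn ((fun p : ℝ × ℝ => dw p.1 p.2) ∘ (fun x : ℝ => (s, x)))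
        (Set.Icc (0:ℝ) J) :=
      hdwcont.comp (continuous_const.prodMk continuous_id).continuousOn
        (fun x hx => ⟨hs, hx⟩)
    exact hψ.continuousOn.mul h1
  have hmeas : ∀ s ∈ Set.Ico (0:ℝ) tstar, AEStronglyMeasurable (fun x => ψ x * w s x)
      (volume.restrict (Set.uIoc (0:ℝ) J)) := by
    intro s hs
    rw [uIoc_of_le hJ.le]
    exact ((hx_cont s hs).mono Ioc_subset_Icc_self).aestronglyMeasurable measurableSet_Ioc
  have h := intervalIntegral.hasDerivAt_integral_of_dominated_loc_of_deriv_le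
      (F := fun s x => ψ x * w s x) (F' := fun s x => ψ x * dw s x)
      (a := 0) (b := J) (μ := volume) (bound := fun _ => C) (x₀ := t) (Metric.ball_mem_nhds t hε0)
      ?_ ?_ ?_ ?_ ?_ ?_
  · exact h.2
  · filter_upwards [isOpen_Ioo.mem_nhds ⟨ht0, ht1⟩] with s hs
    exact hmeas s ⟨hs.1.le, hs.2⟩
  · apply ContinuousOn.intervalIntegrable
    rw [uIcc_of_le hJ.le]
    exact hx_cont t ⟨ht0.le, ht1⟩
  · rw [uIoc_of_le hJ.le]
    exact ((hx_cont' t ⟨ht0.le, ht1⟩).mono Ioc_subset_Icc_self).aestronglyMeasurable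
      measurableSet_Ioc
  · refine ae_of_all _ fun x hx s hs => ?_
    rw [uIoc_of_le hJ.le] at hx
    have hsI : s ∈ Set.Icc (t - ε) (t + ε) := by
      rw [Metric.mem_ball, Real.dist_eq, abs_lt] at hs
      constructor <;> linarith [hs.1, hs.2]
    exact hC (s, x) ⟨hsI, Ioc_subset_Icc_self hx⟩
  · exact intervalIntegrable_const
  · refine ae_of_all _ fun x hx s hs => ?_
    rw [uIoc_of_le hJ.le] at hx
    exact (hderiv x (Ioc_subset_Icc_self hx) s (hball hs)).const_mul (ψ x)

lemma convexOn_abs_rpow {r : ℝ} (hr : 1 ≤ r) :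
    ConvexOn ℝ Set.univ (fun y : ℝ => |y| ^ r) := by
  have himg : (fun y : ℝ => |y|) '' Set.univ = Set.Ici (0:ℝ) := by
    ext z
    constructor
    · rintro ⟨y, -, rfl⟩; exact abs_nonneg y
    · intro hz; exact ⟨z, trivial, abs_of_nonneg hz⟩
  have habs : ConvexOn ℝ Set.univ (fun y : ℝ => |y|) := by
    exact (convexOn_univ_norm (E := ℝ))
  have hmono : MonotoneOn (fun z : ℝ => z ^ r) ((fun y : ℝ => |y|) '' Set.univ) := by
    rw [himg]
    intro a ha b hb hab
    exact Real.rpow_le_rpow ha hab (by linarith)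
  have hconv : ConvexOn ℝ ((fun y : ℝ => |y|) '' Set.univ) (fun z : ℝ => z ^ r) := by
    rw [himg]; exact convexOn_rpow hr
  exact hconv.comp habs hmono

lemma jensen_aux {J r : ℝ} (hJ : 0 < J) (hr : 1 < r) {ψ h : ℝ → ℝ}
    (hψc : Continuous ψ) (hψ0 : ∀ x ∈ Set.Icc (0:ℝ) J, 0 ≤ ψ x)
    (hψ1 : (∫ x in (0:ℝ)..J, ψ x) = 1)
    (hh : ContinuousOn h (Set.Icc (0:ℝ) J)) :
    |∫ x in (0:ℝ)..J, ψ x * h x| ^ r ≤ ∫ x in (0:ℝ)..J, ψ x * |h x| ^ r := by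
  set ν : Measure ℝ :=
    (volume.restrict (Set.Ioc (0:ℝ) J)).withDensity (fun x => (Real.toNNReal (ψ x) : ℝ≥0∞))
    with hν
  have hmeas : Measurable fun x => Real.toNNReal (ψ x) :=
    measurable_real_toNNReal.comp hψc.measurable
  have hofreal : ∀ y : ℝ, ((Real.toNNReal y : ℝ≥0) : ℝ≥0∞) = ENNReal.ofReal y := fun _ => rfl
  have hψint : IntegrableOn ψ (Set.Ioc 0 J) volume :=
    (hψc.continuousOn.integrableOn_Icc).mono_set Ioc_subset_Icc_self
  have hψnn : 0 ≤ᵐ[volume.restrict (Set.Ioc (0:ℝ) J)] ψ :=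
    (ae_restrict_iff' measurableSet_Ioc).2
      (ae_of_all _ fun x hx => hψ0 x (Ioc_subset_Icc_self hx))
  have hprob : IsProbabilityMeasure ν := by
    constructor
    rw [hν, withDensity_apply _ MeasurableSet.univ, Measure.restrict_univ]
    simp_rw [hofreal]
    rw [← ofReal_integral_eq_lintegral_ofReal hψint hψnn]
    have : ∫ x in Set.Ioc (0:ℝ) J, ψ x = 1 := by
      rw [← intervalIntegral.integral_of_le hJ.le]; exact hψ1
    rw [this, ENNReal.ofReal_one]
  have key : ∀ g : ℝ → ℝ, (∫ x, g x ∂ν) = ∫ x in Set.Ioc (0:ℝ) J, ψ x * g x := by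
    intro g
    rw [hν, integral_withDensity_eq_integral_smul hmeas]
    refine setIntegral_congr_fun measurableSet_Ioc fun x hx => ?_
    simp [NNReal.smul_def, Real.coe_toNNReal _ (hψ0 x (Ioc_subset_Icc_self hx))]
  have hint : ∀ g : ℝ → ℝ, ContinuousOn g (Set.Icc (0:ℝ) J) → Integrable g ν := by
    intro g hg
    rw [hν, integrable_withDensity_iff (hmeas.coe_nnreal_ennreal)
      (ae_of_all _ fun x => ENNReal.coe_lt_top)]
    have : ContinuousOn (fun x => g x * ((Real.toNNReal (ψ x) : ℝ≥0∞)).toReal)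
        (Set.Icc (0:ℝ) J) := by
      simp only [ENNReal.coe_toReal]
      exact hg.mul (NNReal.continuous_coe.comp (continuous_real_toNNReal.comp hψc)).continuousOn
    exact (this.integrableOn_Icc).mono_set Ioc_subset_Icc_self
  haveI := hprob
  have hconv := convexOn_abs_rpow hr.le
  have hcont : Continuous fun y : ℝ => |y| ^ r :=
    continuous_abs.rpow_const fun y => Or.inr (by linarith)
  have hfi : Integrable h ν := hint h hh
  have hgi : Integrable ((fun y : ℝ => |y| ^ r) ∘ h) ν := by
    have hco : ContinuousOn (fun x => |h x| ^ r) (Set.Icc (0:ℝ) J) :=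
      (hh.abs).rpow_const fun x _ => Or.inr (by linarith)
    exact hint _ hco
  have hJen := hconv.map_average_le hcont.continuousOn isClosed_univ
    (ae_of_all _ fun _ => Set.mem_univ _) hfi hgi
  rw [average_eq_integral, average_eq_integral] at hJen
  have e1 : (∫ x in (0:ℝ)..J, ψ x * h x) = ∫ x, h x ∂ν := by
    rw [key h, intervalIntegral.integral_of_le hJ.le]
  have e2 : (∫ x in (0:ℝ)..J, ψ x * |h x| ^ r) = ∫ x, |h x| ^ r ∂ν := by
    rw [key (fun x => |h x| ^ r), intervalIntegral.integral_of_le hJ.le]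
  rw [e1, e2]
  exact hJen

lemma psi_hasDeriv {J : ℝ} (x : ℝ) :
    HasDerivAt (fun y => Real.pi / (2*J) * Real.sin (Real.pi / J * y))
      (Real.pi / (2*J) * (Real.pi / J) * Real.cos (Real.pi / J * x)) x := by
  have h1 : HasDerivAt (fun y : ℝ => Real.pi / J * y) (Real.pi / J) x := by
    simpa using (hasDerivAt_id x).const_mul (Real.pi / J)
  have h2 := (Real.hasDerivAt_sin (Real.pi / J * x)).comp x h1
  have h3 := h2.const_mul (Real.pi / (2*J))
  exact h3.congr_deriv (by ring)

lemma psi'_hasDeriv {J : ℝ} (x : ℝ) :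
    HasDerivAt (fun y => Real.pi / (2*J) * (Real.pi / J) * Real.cos (Real.pi / J * y))
      (-(Real.pi / J)^2 * (Real.pi / (2*J) * Real.sin (Real.pi / J * x))) x := by
  have h1 : HasDerivAt (fun y : ℝ => Real.pi / J * y) (Real.pi / J) x := by
    simpa using (hasDerivAt_id x).const_mul (Real.pi / J)
  have h2 := (Real.hasDerivAt_cos (Real.pi / J * x)).comp x h1
  have h3 := h2.const_mul (Real.pi / (2*J) * (Real.pi / J))
  exact h3.congr_deriv (by ring)

lemma psi_integral {J : ℝ} (hJ : 0 < J) :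
    (∫ x in (0:ℝ)..J, Real.pi / (2*J) * Real.sin (Real.pi / J * x)) = 1 := by
  have hc : Real.pi / J ≠ 0 := ne_of_gt (by positivity)
  rw [intervalIntegral.integral_const_mul,
    intervalIntegral.integral_comp_mul_left Real.sin hc, mul_zero,
    div_mul_cancel₀ _ (ne_of_gt hJ), integral_sin, Real.cos_zero, Real.cos_pi, smul_eq_mul]
  have hπ := Real.pi_ne_zero
  field_simp
  ring

lemma param_contWithin {J tstar : ℝ} (hJ : 0 < J) (htstar : 0 < tstar)
    {w : ℝ → ℝ → ℝ} {ψ : ℝ → ℝ} (hψ : Continuous ψ)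
    (hwcont : ContinuousOn (fun p : ℝ × ℝ => w p.1 p.2) (Set.Ico 0 tstar ×ˢ Set.Icc 0 J)) :
    ContinuousWithinAt (fun s => ∫ x in (0:ℝ)..J, ψ x * w s x) (Set.Ici 0) 0 := by
  have hKsub : (Set.Icc (0:ℝ) (tstar/2) ×ˢ Set.Icc (0:ℝ) J) ⊆
      (Set.Ico 0 tstar ×ˢ Set.Icc 0 J) := by
    rintro ⟨s, x⟩ ⟨⟨hs1, hs2⟩, hx⟩
    exact ⟨⟨hs1, by linarith⟩, hx⟩
  obtain ⟨C, hC⟩ := (isCompact_Icc.prod isCompact_Icc).exists_bound_of_continuousOn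
    ((hψ.comp continuous_snd).continuousOn.mul (hwcont.mono hKsub))
  have hIcoMem : Set.Ico (0:ℝ) (tstar/2) ∈ 𝓝[Set.Ici 0] (0:ℝ) :=
    Ico_mem_nhdsGE_of_mem ⟨le_rfl, by linarith⟩
  apply intervalIntegral.continuousWithinAt_of_dominated_interval (bound := fun _ => C)
  · filter_upwards [hIcoMem] with s hs
    have hcs : ContinuousOn (fun x => ψ x * w s x) (Set.Icc (0:ℝ) J) := by
      have h1 : ContinuousOn ((fun p : ℝ × ℝ => w p.1 p.2) ∘ (fun x : ℝ => (s, x)))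
          (Set.Icc (0:ℝ) J) :=
        hwcont.comp (continuous_const.prodMk continuous_id).continuousOn
          (fun x hx => ⟨⟨hs.1, by linarith [hs.2]⟩, hx⟩)
      exact hψ.continuousOn.mul h1
    rw [uIoc_of_le hJ.le]
    exact (hcs.mono Ioc_subset_Icc_self).aestronglyMeasurable measurableSet_Ioc
  · filter_upwards [hIcoMem] with s hs
    refine ae_of_all _ fun x hx => ?_
    rw [uIoc_of_le hJ.le] at hx
    exact hC (s, x) ⟨⟨hs.1, hs.2.le⟩, Ioc_subset_Icc_self hx⟩
  · exact intervalIntegrable_const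
  · refine ae_of_all _ fun x hx => ?_
    rw [uIoc_of_le hJ.le] at hx
    have hline : ContinuousWithinAt (fun s : ℝ => w s x) (Set.Ico 0 tstar) 0 := by
      have h0 := hwcont ((0:ℝ), x) ⟨⟨le_rfl, htstar⟩, Ioc_subset_Icc_self hx⟩
      have h1 := ContinuousWithinAt.comp (g := fun p : ℝ × ℝ => w p.1 p.2)
        (f := fun s : ℝ => (s, x)) (s := Set.Ico 0 tstar)
        (t := Set.Ico 0 tstar ×ˢ Set.Icc 0 J) (x := (0:ℝ)) h0
        (continuous_id.prodMk continuous_const).continuousWithinAt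
        (fun τ hτ => ⟨hτ, Ioc_subset_Icc_self hx⟩)
      exact h1
    exact continuousWithinAt_const.mul
      (hline.mono_of_mem_nhdsWithin (Ico_mem_nhdsGE_of_mem ⟨le_rfl, htstar⟩))

end Helpers
set_option maxHeartbeats 2000000 in
/-- Eigenfunction reduction: testing the semilinear wave equation
`∂ₜ²u = ∂ₓ²u + (κ²/4)|u|^r − ((c₁²+c₂²)/2)u` against the first Dirichlet
eigenfunction `ψ` yields `φ'' + λ₁φ ≥ (κ²/4)|φ|^r` with `φ(0) = α`, `φ'(0) = β > 0`. -/
theorem stmt_7 (J c₁ c₂ κ r tstar μ₁ lam α β : ℝ)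
    (hJ : 0 < J) (hκ : 0 < κ) (hr : 1 < r) (htstar : 0 < tstar)
    (hμ : μ₁ = (Real.pi / J) ^ 2)
    (hlam : lam = μ₁ + (c₁ ^ 2 + c₂ ^ 2) / 2)
    (ψ : ℝ → ℝ)
    (hψ : ψ = fun x => Real.pi / (2 * J) * Real.sin (Real.pi * x / J))
    (u : ℝ → ℝ → ℝ) (u₀ v₀ : ℝ → ℝ)
    (hreg : ContDiffOn ℝ 2 (fun p : ℝ × ℝ => u p.1 p.2)
      (Set.Ico 0 tstar ×ˢ Set.Icc 0 J))
    (hpde : ∀ t ∈ Set.Ioo (0:ℝ) tstar, ∀ x ∈ Set.Ioo (0:ℝ) J,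
      deriv (deriv (fun τ => u τ x)) t
        = deriv (deriv (fun y => u t y)) x
          + κ ^ 2 / 4 * |u t x| ^ r - (c₁ ^ 2 + c₂ ^ 2) / 2 * u t x)
    (hbc0 : ∀ t ∈ Set.Ico (0:ℝ) tstar, u t 0 = 0)
    (hbcJ : ∀ t ∈ Set.Ico (0:ℝ) tstar, u t J = 0)
    (hic : ∀ x, u 0 x = u₀ x)
    (hic' : ∀ x ∈ Set.Icc (0:ℝ) J, derivWithin (fun τ => u τ x) (Set.Ici 0) 0 = v₀ x)
    (hu₀C : ContDiff ℝ (⊤ : ℕ∞) u₀) (hv₀C : ContDiff ℝ (⊤ : ℕ∞) v₀)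
    (hu₀pos : ∀ x ∈ Set.Icc (0:ℝ) J, 0 ≤ u₀ x)
    (hv₀pos : ∀ x ∈ Set.Icc (0:ℝ) J, 0 ≤ v₀ x)
    (x₀ : ℝ) (hx₀ : x₀ ∈ Set.Ioo (0:ℝ) J) (hx₀v : 0 < v₀ x₀)
    (hα : α = ∫ x in (0:ℝ)..J, ψ x * u₀ x)
    (hβ : β = ∫ x in (0:ℝ)..J, ψ x * v₀ x)
    (hαbig : α ≥ (4 * lam / κ ^ 2) ^ ((1:ℝ) / (r - 1))) :
    let φ : ℝ → ℝ := fun t => ∫ x in (0:ℝ)..J, ψ x * u t x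
    φ 0 = α ∧ derivWithin φ (Set.Ici 0) 0 = β ∧ 0 < β ∧
    ∀ t ∈ Set.Ioo (0:ℝ) tstar,
      deriv (deriv φ) t + lam * φ t ≥ κ ^ 2 / 4 * |φ t| ^ r := by
  intro φ
  set S : Set (ℝ × ℝ) := Set.Ico 0 tstar ×ˢ Set.Icc 0 J with hSdef
  set U : ℝ × ℝ → ℝ := fun p => u p.1 p.2 with hUdef
  have hSu : UniqueDiffOn ℝ S := (uniqueDiffOn_Ico 0 tstar).prod (uniqueDiffOn_Icc hJ)
  have hregU : ContDiffOn ℝ 2 U S := hreg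
  have hUc : ContinuousOn U S := hregU.continuousOn
  have hUdiff : ∀ p ∈ S, DifferentiableWithinAt ℝ U S p :=
    fun p hp => (hregU.differentiableOn (by norm_num)) p hp
  have hD1 : ContDiffOn ℝ 1 (fderivWithin ℝ U S) S := hregU.fderivWithin hSu (by norm_num)
  have hFc : ContinuousOn (fderivWithin ℝ U S) S := hD1.continuousOn
  have hFdiff : ∀ p ∈ S, DifferentiableWithinAt ℝ (fderivWithin ℝ U S) S p :=
    fun p hp => (hD1.differentiableOn one_ne_zero) p hp
  have hGc : ContinuousOn (fderivWithin ℝ (fderivWithin ℝ U S) S) S :=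
    (hD1.fderivWithin (m := 0) hSu (by norm_num)).continuousOn
  set F1 : ℝ → ℝ → ℝ := fun s x => fderivWithin ℝ U S (s, x) ((1:ℝ), (0:ℝ)) with hF1def
  set F2 : ℝ → ℝ → ℝ := fun s x => fderivWithin ℝ U S (s, x) ((0:ℝ), (1:ℝ)) with hF2def
  set G11 : ℝ → ℝ → ℝ :=
    fun s x => fderivWithin ℝ (fderivWithin ℝ U S) S (s, x) (1, 0) (1, 0) with hG11def
  set G22 : ℝ → ℝ → ℝ :=
    fun s x => fderivWithin ℝ (fderivWithin ℝ U S) S (s, x) (0, 1) (0, 1) with hG22def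
  have hF1cont : ContinuousOn (fun p : ℝ × ℝ => F1 p.1 p.2) S :=
    hFc.clm_apply continuousOn_const
  have hF2cont : ContinuousOn (fun p : ℝ × ℝ => F2 p.1 p.2) S :=
    hFc.clm_apply continuousOn_const
  have hG11cont : ContinuousOn (fun p : ℝ × ℝ => G11 p.1 p.2) S :=
    (hGc.clm_apply continuousOn_const).clm_apply continuousOn_const
  have hG22cont : ContinuousOn (fun p : ℝ × ℝ => G22 p.1 p.2) S :=
    (hGc.clm_apply continuousOn_const).clm_apply continuousOn_const
  -- time derivatives
  have htd : ∀ x ∈ Set.Icc (0:ℝ) J, ∀ s ∈ Set.Ioo (0:ℝ) tstar,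
      HasDerivAt (fun τ => u τ x) (F1 s x) s := by
    intro x hx s hs
    have h := line_fst (U := U) (S := S) (hUdiff (s, x) ⟨⟨hs.1.le, hs.2⟩, hx⟩)
      (fun τ hτ => ⟨⟨hτ.1.le, hτ.2⟩, hx⟩ : Set.MapsTo _ (Set.Ioo 0 tstar) S) hs
    exact h.hasDerivAt (isOpen_Ioo.mem_nhds hs)
  have htd2 : ∀ x ∈ Set.Icc (0:ℝ) J, ∀ s ∈ Set.Ioo (0:ℝ) tstar,
      HasDerivAt (fun τ => F1 τ x) (G11 s x) s := by
    intro x hx s hs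
    have h := clm_line_fst (U := U) (S := S) (hFdiff (s, x) ⟨⟨hs.1.le, hs.2⟩, hx⟩)
      (fun τ hτ => ⟨⟨hτ.1.le, hτ.2⟩, hx⟩ : Set.MapsTo _ (Set.Ioo 0 tstar) S) hs
    exact h.hasDerivAt (isOpen_Ioo.mem_nhds hs)
  -- space derivatives
  have hxd : ∀ t ∈ Set.Ico (0:ℝ) tstar, ∀ x ∈ Set.Ioo (0:ℝ) J,
      HasDerivAt (fun y => u t y) (F2 t x) x := by
    intro t ht x hx
    have h := line_snd (U := U) (S := S) (hUdiff (t, x) ⟨ht, ⟨hx.1.le, hx.2.le⟩⟩)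
      (fun y hy => ⟨ht, ⟨hy.1.le, hy.2.le⟩⟩ : Set.MapsTo _ (Set.Ioo 0 J) S) hx
    exact h.hasDerivAt (isOpen_Ioo.mem_nhds hx)
  have hxd2 : ∀ t ∈ Set.Ico (0:ℝ) tstar, ∀ x ∈ Set.Ioo (0:ℝ) J,
      HasDerivAt (fun y => F2 t y) (G22 t x) x := by
    intro t ht x hx
    have h := clm_line_snd (U := U) (S := S) (hFdiff (t, x) ⟨ht, ⟨hx.1.le, hx.2.le⟩⟩)
      (fun y hy => ⟨ht, ⟨hy.1.le, hy.2.le⟩⟩ : Set.MapsTo _ (Set.Ioo 0 J) S) hx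
    exact h.hasDerivAt (isOpen_Ioo.mem_nhds hx)
  -- second-derivative identities
  have hdd_t : ∀ x ∈ Set.Icc (0:ℝ) J, ∀ t ∈ Set.Ioo (0:ℝ) tstar,
      deriv (deriv (fun τ => u τ x)) t = G11 t x := by
    intro x hx t ht
    have hev : deriv (fun τ => u τ x) =ᶠ[𝓝 t] fun τ => F1 τ x := by
      filter_upwards [isOpen_Ioo.mem_nhds ht] with s hs using (htd x hx s hs).deriv
    rw [hev.deriv_eq, (htd2 x hx t ht).deriv]
  have hdd_x : ∀ t ∈ Set.Ico (0:ℝ) tstar, ∀ x ∈ Set.Ioo (0:ℝ) J,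
      deriv (deriv (fun y => u t y)) x = G22 t x := by
    intro t ht x hx
    have hev : deriv (fun y => u t y) =ᶠ[𝓝 x] fun y => F2 t y := by
      filter_upwards [isOpen_Ioo.mem_nhds hx] with y hy using (hxd t ht y hy).deriv
    rw [hev.deriv_eq, (hxd2 t ht x hx).deriv]
  -- ψ facts
  have hψ2 : ψ = fun x => Real.pi / (2*J) * Real.sin (Real.pi / J * x) := by
    rw [hψ]; funext x; rw [show Real.pi * x / J = Real.pi / J * x by ring]
  set Ψ' : ℝ → ℝ := fun x => Real.pi / (2*J) * (Real.pi / J) * Real.cos (Real.pi / J * x)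
    with hΨ'def
  have hψd : ∀ x, HasDerivAt ψ (Ψ' x) x := by
    intro x; rw [hψ2]; exact psi_hasDeriv x
  have hψ'd : ∀ x, HasDerivAt Ψ' (-μ₁ * ψ x) x := by
    intro x
    have h := psi'_hasDeriv (J := J) x
    have he : -μ₁ * ψ x = -(Real.pi / J)^2 * (Real.pi / (2*J) * Real.sin (Real.pi / J * x)) := by
      rw [hμ, hψ2]
    rw [he]; exact h
  have hΨ'c : Continuous Ψ' := by rw [hΨ'def]; fun_prop
  have hψc : Continuous ψ := by rw [hψ2]; fun_prop
  have hψz : ψ 0 = 0 := by rw [hψ2]; simp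
  have hψJ : ψ J = 0 := by
    rw [hψ2]; simp [div_mul_cancel₀ Real.pi (ne_of_gt hJ), Real.sin_pi]
  have hψnn : ∀ x ∈ Set.Icc (0:ℝ) J, 0 ≤ ψ x := by
    intro x hx
    rw [hψ2]
    have h1 : 0 ≤ Real.pi / J * x := mul_nonneg (by positivity) hx.1
    have h2 : Real.pi / J * x ≤ Real.pi := by
      rw [div_mul_eq_mul_div, div_le_iff₀ hJ]
      nlinarith [Real.pi_pos, hx.2]
    exact mul_nonneg (by positivity) (Real.sin_nonneg_of_nonneg_of_le_pi h1 h2)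
  have hψ1 : (∫ x in (0:ℝ)..J, ψ x) = 1 := by rw [hψ2]; exact psi_integral hJ
  -- generic interval integrability from continuity on `Icc`
  have mkint : ∀ {f : ℝ → ℝ}, ContinuousOn f (Set.Icc (0:ℝ) J) →
      IntervalIntegrable f volume 0 J := by
    intro f hf
    exact (by rwa [uIcc_of_le hJ.le] : ContinuousOn f (Set.uIcc 0 J)).intervalIntegrable
  have comp_cont : ∀ {g : ℝ × ℝ → ℝ}, ContinuousOn g S → ∀ s ∈ Set.Ico (0:ℝ) tstar,
      ContinuousOn (fun x => g (s, x)) (Set.Icc (0:ℝ) J) := by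
    intro g hg s hs
    have h1 : ContinuousOn (g ∘ (fun x : ℝ => (s, x))) (Set.Icc (0:ℝ) J) :=
      hg.comp (continuous_const.prodMk continuous_id).continuousOn (fun x hx => ⟨hs, hx⟩)
    exact h1
  -- Part 1
  have hφ0 : φ 0 = α := by
    show (∫ x in (0:ℝ)..J, ψ x * u 0 x) = α
    rw [hα]
    exact intervalIntegral.integral_congr fun x _ => by rw [hic]
  -- derivative of φ
  set I1 : ℝ → ℝ := fun s => ∫ x in (0:ℝ)..J, ψ x * F1 s x with hI1def
  have hDφ : ∀ t ∈ Set.Ioo (0:ℝ) tstar, HasDerivAt φ (I1 t) t := by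
    intro t ht
    exact param_deriv hJ hψc hUc hF1cont htd ht
  have hDI1 : ∀ t ∈ Set.Ioo (0:ℝ) tstar,
      HasDerivAt I1 (∫ x in (0:ℝ)..J, ψ x * G11 t x) t := by
    intro t ht
    exact param_deriv hJ hψc hF1cont hG11cont htd2 ht
  have hφ'' : ∀ t ∈ Set.Ioo (0:ℝ) tstar,
      deriv (deriv φ) t = ∫ x in (0:ℝ)..J, ψ x * G11 t x := by
    intro t ht
    have hev : deriv φ =ᶠ[𝓝 t] I1 := by
      filter_upwards [isOpen_Ioo.mem_nhds ht] with s hs using (hDφ s hs).deriv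
    rw [hev.deriv_eq, (hDI1 t ht).deriv]
  -- Part 3 : 0 < β
  have hβpos : 0 < β := by
    have hhc : Continuous fun x => ψ x * v₀ x := hψc.mul hv₀C.continuous
    have hψx₀ : 0 < ψ x₀ := by
      rw [hψ2]
      have h1 : 0 < Real.pi / J * x₀ := mul_pos (by positivity) hx₀.1
      have h2 : Real.pi / J * x₀ < Real.pi := by
        rw [div_mul_eq_mul_div, div_lt_iff₀ hJ]
        nlinarith [Real.pi_pos, hx₀.2]
      exact mul_pos (by positivity) (Real.sin_pos_of_pos_of_lt_pi h1 h2)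
    have hhx₀ : 0 < ψ x₀ * v₀ x₀ := mul_pos hψx₀ hx₀v
    have hopen : IsOpen ({x : ℝ | 0 < ψ x * v₀ x} ∩ Set.Ioo 0 J) :=
      (isOpen_lt continuous_const hhc).inter isOpen_Ioo
    obtain ⟨δ, hδ0, hball⟩ := Metric.isOpen_iff.1 hopen x₀ ⟨hhx₀, hx₀⟩
    set a := x₀ - δ/2 with hadef
    set b := x₀ + δ/2 with hbdef
    have hab : a < b := by rw [hadef, hbdef]; linarith
    have haO : a ∈ {x : ℝ | 0 < ψ x * v₀ x} ∩ Set.Ioo 0 J := by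
      apply hball
      rw [Metric.mem_ball, Real.dist_eq, hadef,
        show x₀ - δ/2 - x₀ = -(δ/2) by ring, abs_neg, abs_of_nonneg (by linarith)]
      linarith
    have hbO : b ∈ {x : ℝ | 0 < ψ x * v₀ x} ∩ Set.Ioo 0 J := by
      apply hball
      rw [Metric.mem_ball, Real.dist_eq, hbdef,
        show x₀ + δ/2 - x₀ = δ/2 by ring, abs_of_nonneg (by linarith)]
      linarith
    have hint : ∀ p q : ℝ, IntervalIntegrable (fun x => ψ x * v₀ x) volume p q :=
      fun p q => hhc.intervalIntegrable p q
    have hmid : 0 < ∫ x in a..b, ψ x * v₀ x := by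
      apply intervalIntegral.intervalIntegral_pos_of_pos_on (hint a b) _ hab
      intro x hx
      have hxball : x ∈ Metric.ball x₀ δ := by
        rw [Metric.mem_ball, Real.dist_eq, abs_lt]
        rw [hadef] at hx; rw [hbdef] at hx
        constructor <;> [linarith [hx.1]; linarith [hx.2]]
      exact (hball hxball).1
    have hnn : ∀ x ∈ Set.Icc (0:ℝ) J, 0 ≤ ψ x * v₀ x :=
      fun x hx => mul_nonneg (hψnn x hx) (hv₀pos x hx)
    have h1 : 0 ≤ ∫ x in (0:ℝ)..a, ψ x * v₀ x := by
      apply intervalIntegral.integral_nonneg haO.2.1.le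
      intro y hy
      exact hnn y ⟨hy.1, le_trans hy.2 haO.2.2.le⟩
    have h2 : 0 ≤ ∫ x in b..J, ψ x * v₀ x := by
      apply intervalIntegral.integral_nonneg hbO.2.2.le
      intro y hy
      exact hnn y ⟨le_trans hbO.2.1.le hy.1, hy.2⟩
    have hsum : (∫ x in (0:ℝ)..J, ψ x * v₀ x)
        = ((∫ x in (0:ℝ)..a, ψ x * v₀ x) + (∫ x in a..b, ψ x * v₀ x))
          + (∫ x in b..J, ψ x * v₀ x) := by
      rw [intervalIntegral.integral_add_adjacent_intervals (hint 0 a) (hint a b),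
        intervalIntegral.integral_add_adjacent_intervals (hint 0 b) (hint b J)]
    rw [hβ, hsum]
    linarith
  -- Part 2 : derivWithin φ (Ici 0) 0 = β
  have hF10 : ∀ x ∈ Set.Icc (0:ℝ) J, F1 0 x = v₀ x := by
    intro x hx
    have h0S : ((0:ℝ), x) ∈ S := ⟨⟨le_rfl, htstar⟩, hx⟩
    have hder : HasDerivWithinAt (fun τ => u τ x) (F1 0 x) (Set.Ico 0 tstar) 0 :=
      line_fst (U := U) (S := S) (hUdiff _ h0S)
        (fun τ hτ => ⟨hτ, hx⟩ : Set.MapsTo _ (Set.Ico 0 tstar) S) ⟨le_rfl, htstar⟩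
    have hder' : HasDerivWithinAt (fun τ => u τ x) (F1 0 x) (Set.Ici 0) 0 :=
      hder.mono_of_mem_nhdsWithin (Ico_mem_nhdsGE_of_mem ⟨le_rfl, htstar⟩)
    have := hder'.derivWithin ((uniqueDiffOn_Ici 0) 0 Set.self_mem_Ici)
    rw [← this, hic' x hx]
  have hI10 : I1 0 = β := by
    rw [hI1def, hβ]
    apply intervalIntegral.integral_congr
    intro x hx
    rw [uIcc_of_le hJ.le] at hx
    show ψ x * F1 0 x = ψ x * v₀ x
    rw [hF10 x hx]
  have hφcont : ContinuousWithinAt φ (Set.Ici 0) 0 :=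
    param_contWithin hJ htstar hψc hUc
  have hI1cont : ContinuousWithinAt I1 (Set.Ici 0) 0 :=
    param_contWithin hJ htstar hψc hF1cont
  have hderivβ : HasDerivWithinAt φ β (Set.Ici 0) 0 := by
    apply hasDerivWithinAt_Ici_of_tendsto_deriv
      (fun s hs => (hDφ s hs).differentiableAt.differentiableWithinAt)
      (hφcont.mono (fun y hy => le_of_lt hy.1))
      (Ioo_mem_nhdsGT_of_mem ⟨le_rfl, htstar⟩)
    have h1 : Tendsto I1 (𝓝[Set.Ici 0] 0) (𝓝 β) := by
      rw [← hI10]; exact hI1cont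
    have h2 : Tendsto I1 (𝓝[>] (0:ℝ)) (𝓝 β) :=
      h1.mono_left (nhdsWithin_mono 0 Ioi_subset_Ici_self)
    refine h2.congr' ?_
    filter_upwards [Ioo_mem_nhdsGT_of_mem (⟨le_rfl, htstar⟩ : (0:ℝ) ∈ Set.Ico 0 tstar)]
      with s hs
    exact ((hDφ s hs).deriv).symm
  have hφ' : derivWithin φ (Set.Ici 0) 0 = β :=
    hderivβ.derivWithin ((uniqueDiffOn_Ici 0) 0 Set.self_mem_Ici)
  -- Part 4
  refine ⟨hφ0, hφ', hβpos, ?_⟩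
  intro t ht
  have htI : t ∈ Set.Ico (0:ℝ) tstar := ⟨ht.1.le, ht.2⟩
  have contu : ContinuousOn (fun x => u t x) (Set.Icc (0:ℝ) J) := comp_cont hUc t htI
  have contF2 : ContinuousOn (fun x => F2 t x) (Set.Icc (0:ℝ) J) :=
    comp_cont hF2cont t htI
  have contG22 : ContinuousOn (fun x => G22 t x) (Set.Icc (0:ℝ) J) :=
    comp_cont hG22cont t htI
  have contabs : ContinuousOn (fun x => |u t x| ^ r) (Set.Icc (0:ℝ) J) :=
    (contu.abs).rpow_const fun x _ => Or.inr (by linarith)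
  have int1 : IntervalIntegrable (fun x => ψ x * G22 t x) volume 0 J :=
    mkint (hψc.continuousOn.mul contG22)
  have int2 : IntervalIntegrable (fun x => ψ x * |u t x| ^ r) volume 0 J :=
    mkint (hψc.continuousOn.mul contabs)
  have int3 : IntervalIntegrable (fun x => ψ x * u t x) volume 0 J :=
    mkint (hψc.continuousOn.mul contu)
  have hptw : ∀ x ∈ Set.Ioo (0:ℝ) J,
      G11 t x = G22 t x + κ^2/4 * |u t x| ^ r - (c₁^2+c₂^2)/2 * u t x := by
    intro x hx
    have h := hpde t ht x hx
    rw [hdd_t x ⟨hx.1.le, hx.2.le⟩ t ht, hdd_x t htI x hx] at h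
    exact h
  have haeJ : ∀ᵐ x : ℝ ∂volume, x ≠ J := by
    refine (MeasureTheory.ae_iff).2 ?_
    have hset : {x : ℝ | ¬ x ≠ J} = {J} := by ext y; simp
    rw [hset]
    exact measure_singleton J
  have hcongr : (∫ x in (0:ℝ)..J, ψ x * G11 t x)
      = ∫ x in (0:ℝ)..J, ψ x * (G22 t x + κ^2/4 * |u t x| ^ r - (c₁^2+c₂^2)/2 * u t x) := by
    apply intervalIntegral.integral_congr_ae
    filter_upwards [haeJ] with x hxJ hxI
    rw [uIoc_of_le hJ.le] at hxI
    have hxIoo : x ∈ Set.Ioo (0:ℝ) J := ⟨hxI.1, lt_of_le_of_ne hxI.2 hxJ⟩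
    rw [hptw x hxIoo]
  have hsplit : (∫ x in (0:ℝ)..J,
        ψ x * (G22 t x + κ^2/4 * |u t x| ^ r - (c₁^2+c₂^2)/2 * u t x))
      = (∫ x in (0:ℝ)..J, ψ x * G22 t x)
        + κ^2/4 * (∫ x in (0:ℝ)..J, ψ x * |u t x| ^ r)
        - (c₁^2+c₂^2)/2 * (∫ x in (0:ℝ)..J, ψ x * u t x) := by
    rw [show (fun x => ψ x * (G22 t x + κ^2/4 * |u t x| ^ r - (c₁^2+c₂^2)/2 * u t x))
        = fun x => (ψ x * G22 t x + κ^2/4 * (ψ x * |u t x| ^ r))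
          - (c₁^2+c₂^2)/2 * (ψ x * u t x) from funext fun x => by ring]
    rw [intervalIntegral.integral_sub (int1.add (int2.const_mul _)) (int3.const_mul _),
      intervalIntegral.integral_add int1 (int2.const_mul _),
      intervalIntegral.integral_const_mul, intervalIntegral.integral_const_mul]
  have hIBP : (∫ x in (0:ℝ)..J, ψ x * G22 t x)
      = -μ₁ * (∫ x in (0:ℝ)..J, ψ x * u t x) := by
    set g : ℝ → ℝ := fun x => ψ x * F2 t x - Ψ' x * u t x with hgdef
    have hgc : ContinuousOn g (Set.Icc (0:ℝ) J) :=
      (hψc.continuousOn.mul contF2).sub (hΨ'c.continuousOn.mul contu)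
    have hg' : ∀ x ∈ Set.Ioo (0:ℝ) J,
        HasDerivAt g (ψ x * G22 t x + μ₁ * (ψ x * u t x)) x := by
      intro x hx
      have h1 := (hψd x).mul (hxd2 t htI x hx)
      have h2 := (hψ'd x).mul (hxd t htI x hx)
      have h3 := h1.sub h2
      exact h3.congr_deriv (by ring)
    have hintg : IntervalIntegrable (fun x => ψ x * G22 t x + μ₁ * (ψ x * u t x))
        volume 0 J := int1.add (int3.const_mul μ₁)
    have hFTC := intervalIntegral.integral_eq_sub_of_hasDerivAt_of_le hJ.le hgc hg' hintg
    have hg0 : g 0 = 0 := by rw [hgdef]; simp [hψz, hbc0 t htI]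
    have hgJ : g J = 0 := by rw [hgdef]; simp [hψJ, hbcJ t htI]
    rw [hg0, hgJ, sub_zero] at hFTC
    rw [intervalIntegral.integral_add int1 (int3.const_mul μ₁),
      intervalIntegral.integral_const_mul] at hFTC
    linarith [hFTC]
  have hJen := jensen_aux hJ hr hψc hψnn hψ1 contu
  have hφt : φ t = ∫ x in (0:ℝ)..J, ψ x * u t x := rfl
  rw [ge_iff_le, hφ'' t ht, hcongr, hsplit, hIBP, hφt, hlam]
  have hκ4 : (0:ℝ) ≤ κ^2/4 := by positivity
  have hmul := mul_le_mul_of_nonneg_left hJen hκ4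
  set X := ∫ x in (0:ℝ)..J, ψ x * u t x
  set Y := ∫ x in (0:ℝ)..J, ψ x * |u t x| ^ r
  have heq : -μ₁ * X + κ^2/4 * Y - (c₁^2+c₂^2)/2 * X + (μ₁ + (c₁^2+c₂^2)/2) * X
      = κ^2/4 * Y := by ring
  linarith [heq, hmul]
end
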